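/- Let X be an at most countable set with weight function λ and f : X → ℝ subharmonic and bounded above. Then for every x ∈ X, the limit lim_{k→∞} ω_x^k(f) exists and defines a harmonic function g on X with g ≥ f, where ω_x^k(f) = ∑_ζ λ^{⋄k}(x,ζ) f(ζ). -/
import Mathlib


open Filter Topology

open Classical in
noncomputable def dpow {X : Type*} (w : X → X → ℝ) : ℕ → X → X → ℝ
  | 0 => fun x y => if x = y then 1 else 0
  | k + 1 => fun x y => ∑ᶠ ζ, w x ζ * dpow w k ζ y

lemma dpow_supp {X : Type*} (w : X → X → ℝ)
    (hfin : ∀ x, (Function.support (w x)).Finite) :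
    ∀ (k : ℕ) (x : X), (Function.support (dpow w k x)).Finite := by
  intro k
  induction k with
  | zero =>
    intro x
    apply (Set.finite_singleton x).subset
    intro y hy
    simp only [Function.mem_support, dpow] at hy
    by_contra h
    simp only [Set.mem_singleton_iff] at h
    exact hy (if_neg fun e => h e.symm)
  | succ k ih =>
    intro x
    apply ((hfin x).biUnion (fun ζ _ => ih ζ)).subset
    intro y hy
    simp only [Function.mem_support, dpow] at hy
    by_contra h
    apply hy
    apply finsum_eq_zero_of_forall_eq_zero
    intro ζ
    rcases eq_or_ne (w x ζ) 0 with h1 | h1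
    · simp [h1]
    rcases eq_or_ne (dpow w k ζ y) 0 with h2 | h2
    · simp [h2]
    exact absurd (Set.mem_biUnion (Function.mem_support.2 h1) (Function.mem_support.2 h2)) h

open Classical in
lemma dpow_step {X : Type*} (w : X → X → ℝ)
    (hfin : ∀ x, (Function.support (w x)).Finite)
    (f : X → ℝ) (k : ℕ) (x : X) :
    ∑ᶠ ζ, dpow w (k+1) x ζ * f ζ = ∑ᶠ ζ, w x ζ * ∑ᶠ y, dpow w k ζ y * f y := by
  classical
  set s : Finset X := (hfin x).toFinset with hs
  set t : Finset X := s.biUnion (fun ζ => (dpow_supp w hfin k ζ).toFinset) with ht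
  have hsubt : ∀ ζ ∈ s, Function.support (dpow w k ζ) ⊆ ↑t := by
    intro ζ hζ y hy
    simp only [ht, Finset.coe_biUnion, Set.mem_iUnion]
    exact ⟨ζ, hζ, (dpow_supp w hfin k ζ).mem_toFinset.2 hy⟩
  have h1 : ∀ y, dpow w (k+1) x y = ∑ ζ ∈ s, w x ζ * dpow w k ζ y := by
    intro y
    show (∑ᶠ ζ, w x ζ * dpow w k ζ y) = _
    apply finsum_eq_finset_sum_of_support_subset
    intro ζ hζ
    simp only [Function.mem_support] at hζ
    have : w x ζ ≠ 0 := fun h => hζ (by simp [h])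
    exact (hfin x).mem_toFinset.2 this
  have hLsupp : Function.support (fun y => dpow w (k+1) x y * f y) ⊆ ↑t := by
    intro y hy
    simp only [Function.mem_support] at hy
    have : dpow w (k+1) x y ≠ 0 := fun h => hy (by simp [h])
    rw [h1 y] at this
    obtain ⟨ζ, hζ, hne⟩ := Finset.exists_ne_zero_of_sum_ne_zero this
    have hw : dpow w k ζ y ≠ 0 := fun h => hne (by simp [h])
    exact hsubt ζ hζ hw
  rw [finsum_eq_finset_sum_of_support_subset _ hLsupp]
  have hRsupp : Function.support (fun ζ => w x ζ * ∑ᶠ y, dpow w k ζ y * f y) ⊆ ↑s := by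
    intro ζ hζ
    simp only [Function.mem_support] at hζ
    have : w x ζ ≠ 0 := fun h => hζ (by simp [h])
    exact (hfin x).mem_toFinset.2 this
  rw [finsum_eq_finset_sum_of_support_subset _ hRsupp]
  have h2 : ∀ ζ ∈ s, (∑ᶠ y, dpow w k ζ y * f y) = ∑ y ∈ t, dpow w k ζ y * f y := by
    intro ζ hζ
    apply finsum_eq_finset_sum_of_support_subset
    intro y hy
    simp only [Function.mem_support] at hy
    have : dpow w k ζ y ≠ 0 := fun h => hy (by simp [h])
    exact hsubt ζ hζ this
  calc ∑ y ∈ t, dpow w (k+1) x y * f y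
      = ∑ y ∈ t, ∑ ζ ∈ s, w x ζ * dpow w k ζ y * f y := by
        refine Finset.sum_congr rfl fun y _ => ?_
        rw [h1 y, Finset.sum_mul]
    _ = ∑ ζ ∈ s, ∑ y ∈ t, w x ζ * dpow w k ζ y * f y := Finset.sum_comm
    _ = ∑ ζ ∈ s, w x ζ * ∑ᶠ y, dpow w k ζ y * f y := by
        refine Finset.sum_congr rfl fun ζ hζ => ?_
        rw [h2 ζ hζ, Finset.mul_sum]
        refine Finset.sum_congr rfl fun y _ => ?_
        ring

/-- a subharmonic function bounded above has a harmonic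
pointwise limit of its iterates, dominating it. -/
theorem stmt_19 {X : Type*} [Countable X] (w : X → X → ℝ)
    (hnn : ∀ x y, 0 ≤ w x y) (hfin : ∀ x, (Function.support (w x)).Finite)
    (hrow : ∀ x, ∑ᶠ y, w x y = 1)
    (f : X → ℝ) (hsub : ∀ x, f x ≤ ∑ᶠ ζ, w x ζ * f ζ)
    (hbdd : ∃ M : ℝ, ∀ x, f x ≤ M) :
    ∃ g : X → ℝ,
      (∀ x, Tendsto (fun k => ∑ᶠ ζ, dpow w k x ζ * f ζ) atTop (𝓝 (g x))) ∧
      (∀ x, g x = ∑ᶠ ζ, w x ζ * g ζ) ∧ ∀ x, f x ≤ g x := by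
  classical
  obtain ⟨M, hM⟩ := hbdd
  set F : ℕ → X → ℝ := fun k x => ∑ᶠ ζ, dpow w k x ζ * f ζ with hF
  have hF0 : ∀ x, F 0 x = f x := by
    intro x
    have : ∀ ζ, ζ ≠ x → dpow w 0 x ζ * f ζ = 0 := by
      intro ζ hζ
      have : dpow w 0 x ζ = 0 := if_neg fun e => hζ e.symm
      simp [this]
    rw [hF]
    simp only
    rw [finsum_eq_single _ x this]
    simp [dpow]
  have hstep : ∀ k x, F (k+1) x = ∑ᶠ ζ, w x ζ * F k ζ := fun k x => dpow_step w hfin f k x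
  -- convert finsums over w x to finset sums
  have hconv : ∀ (x : X) (u : X → ℝ),
      (∑ᶠ ζ, w x ζ * u ζ) = ∑ ζ ∈ (hfin x).toFinset, w x ζ * u ζ := by
    intro x u
    apply finsum_eq_finset_sum_of_support_subset
    intro ζ hζ
    simp only [Function.mem_support] at hζ
    have : w x ζ ≠ 0 := fun h => hζ (by simp [h])
    exact (hfin x).mem_toFinset.2 this
  have hrow' : ∀ x, (∑ ζ ∈ (hfin x).toFinset, w x ζ) = 1 := by
    intro x
    rw [← hrow x]
    exact (finsum_eq_finset_sum_of_support_subset _ (fun ζ hζ =>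
      (hfin x).mem_toFinset.2 hζ)).symm
  have hmono : ∀ k x, F k x ≤ F (k+1) x := by
    intro k
    induction k with
    | zero =>
      intro x
      rw [hF0 x, hstep 0 x]
      calc f x ≤ ∑ᶠ ζ, w x ζ * f ζ := hsub x
        _ = ∑ᶠ ζ, w x ζ * F 0 ζ := finsum_congr fun ζ => by rw [hF0]
    | succ k ih =>
      intro x
      rw [hstep k x, hstep (k+1) x, hconv, hconv]
      exact Finset.sum_le_sum fun ζ _ => mul_le_mul_of_nonneg_left (ih ζ) (hnn x ζ)
  have hbddF : ∀ k x, F k x ≤ M := by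
    intro k
    induction k with
    | zero => intro x; rw [hF0]; exact hM x
    | succ k ih =>
      intro x
      rw [hstep k x, hconv]
      calc ∑ ζ ∈ (hfin x).toFinset, w x ζ * F k ζ
          ≤ ∑ ζ ∈ (hfin x).toFinset, w x ζ * M :=
            Finset.sum_le_sum fun ζ _ => mul_le_mul_of_nonneg_left (ih ζ) (hnn x ζ)
        _ = (∑ ζ ∈ (hfin x).toFinset, w x ζ) * M := by rw [Finset.sum_mul]
        _ = M := by rw [hrow' x, one_mul]
  have hMonoF : ∀ x, Monotone (fun k => F k x) :=
    fun x => monotone_nat_of_le_succ (fun k => hmono k x)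
  have hbddAbove : ∀ x, BddAbove (Set.range (fun k => F k x)) := by
    intro x
    exact ⟨M, by rintro _ ⟨k, rfl⟩; exact hbddF k x⟩
  set g : X → ℝ := fun x => ⨆ k, F k x with hg
  have htend : ∀ x, Tendsto (fun k => F k x) atTop (𝓝 (g x)) :=
    fun x => tendsto_atTop_ciSup (hMonoF x) (hbddAbove x)
  refine ⟨g, htend, ?_, ?_⟩
  · intro x
    have h1 : Tendsto (fun k => F (k+1) x) atTop (𝓝 (g x)) :=
      (htend x).comp (tendsto_add_atTop_nat 1)
    have h2 : Tendsto (fun k => ∑ ζ ∈ (hfin x).toFinset, w x ζ * F k ζ) atTop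
        (𝓝 (∑ ζ ∈ (hfin x).toFinset, w x ζ * g ζ)) := by
      apply tendsto_finset_sum
      intro ζ _
      exact (htend ζ).const_mul _
    have heq : (fun k => F (k+1) x) = fun k => ∑ ζ ∈ (hfin x).toFinset, w x ζ * F k ζ := by
      funext k; rw [hstep k x, hconv]
    rw [heq] at h1
    have := tendsto_nhds_unique h1 h2
    rw [this, hconv x g]
  · intro x
    rw [← hF0 x]
    exact le_ciSup (hbddAbove x) 0
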